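/- Let X ∈ C^{k̃}(2𝕋^d, SL(2,ℝ)) satisfy X(θ+α)^{−1} S^V_{E_m^+}(θ) X(θ) = [[1,ζ],[0,1]] with ζ > 0. Then for any κ ∈ (0,1/4), if ‖X‖_{k̃} ζ^{κ/2} ≤ 1/4, the following hold: 0 < [X₁₁²]/([X₁₁²][X₁₂²] − [X₁₁X₁₂]²) ≤ (1/2)ζ^{−κ} and [X₁₁²][X₁₂²] − [X₁₁X₁₂]² ≥ 8ζ^{2κ}. -/

import Mathlib

open MeasureTheory Real
open scoped ENNReal BigOperators Classical

attribute [local instance] Matrix.normedAddCommGroup Matrix.normedSpace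

noncomputable section

namespace QPS

/-- `α ∈ DC_d(γ,τ)`: the Diophantine condition
`inf_l |⟨n,α⟩ - l| ≥ γ/|n|^τ` for all `n ∈ ℤ^d ∖ {0}`. -/
def DiophCond (d : ℕ) (γ τ : ℝ) (α : Fin d → ℝ) : Prop :=
  ∀ n : Fin d → ℤ, n ≠ 0 → ∀ l : ℤ,
    γ / ‖n‖ ^ τ ≤ |(∑ i, (n i : ℝ) * α i) - l|

/-- distance to the nearest integer, `‖x‖_{ℝ/ℤ}`. -/
def distToZ (x : ℝ) : ℝ := |x - round x|

/-- `f` is `ℤ^d`-periodic, i.e. a function on the torus `𝕋^d`. -/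
def Zperiodic {d : ℕ} {X : Type*} (f : (Fin d → ℝ) → X) : Prop :=
  ∀ θ : Fin d → ℝ, ∀ n : Fin d → ℤ, f (θ + fun i => (n i : ℝ)) = f θ

/-- `f` is `(2ℤ)^d`-periodic, i.e. a function on the torus `2𝕋^d = (ℝ/2ℤ)^d`. -/
def Z2periodic {d : ℕ} {X : Type*} (f : (Fin d → ℝ) → X) : Prop :=
  ∀ θ : Fin d → ℝ, ∀ n : Fin d → ℤ, f (θ + fun i => 2 * (n i : ℝ)) = f θ

/-- The `C^k` norm `‖F‖_k = sup_{|j| ≤ k, θ} ‖∂^j F(θ)‖`. -/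
def CkNorm {d : ℕ} {E : Type*} [NormedAddCommGroup E] [NormedSpace ℝ E]
    (k : ℕ) (f : (Fin d → ℝ) → E) : ℝ :=
  ⨆ p : Fin (k + 1) × (Fin d → ℝ), ‖iteratedFDeriv ℝ p.1 f p.2‖

/-- The rotation matrix `R_φ` by angle `2πφ`. -/
def Rot (φ : ℝ) : Matrix (Fin 2) (Fin 2) ℝ :=
  !![Real.cos (2 * π * φ), -Real.sin (2 * π * φ);
     Real.sin (2 * π * φ),  Real.cos (2 * π * φ)]

/-- The unit vector of angle `2πy` on the circle. -/
def unitVec (y : ℝ) : Fin 2 → ℝ := ![Real.cos (2 * π * y), Real.sin (2 * π * y)]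

/-- The Euclidean norm on `ℝ²`. -/
def enorm2 (v : Fin 2 → ℝ) : ℝ := Real.sqrt (v 0 ^ 2 + v 1 ^ 2)

/-- `ψ` is a lift of the projectivized cocycle of `A`: it is continuous, `ℤ^d`-periodic in the
base, `ℤ`-periodic in the fibre, and `y ↦ y + ψ_θ(y)` covers the projective action of `A(θ)`
on the circle. -/
def IsLift {d : ℕ} (A : (Fin d → ℝ) → Matrix (Fin 2) (Fin 2) ℝ)
    (ψ : (Fin d → ℝ) → ℝ → ℝ) : Prop :=
  Continuous (fun p : (Fin d → ℝ) × ℝ => ψ p.1 p.2) ∧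
  (∀ θ, ∀ n : Fin d → ℤ, ∀ y, ψ (θ + fun i => (n i : ℝ)) y = ψ θ y) ∧
  (∀ θ y, ψ θ (y + 1) = ψ θ y) ∧
  (∀ θ y, unitVec (y + ψ θ y) =
    (enorm2 ((A θ).mulVec (unitVec y)))⁻¹ • (A θ).mulVec (unitVec y))

/-- `ρ` is a fibered rotation number of the cocycle `(α, A)`: there are a lift `ψ` of the
projectivized cocycle and a probability measure `μ` on `𝕋^d × 𝕊¹` (realized on the
fundamental domain via fractional parts) invariant under the induced map and projecting to
Lebesgue measure on `𝕋^d`, such that `ρ = ∫ ψ dμ`. -/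
def IsFiberedRotationNumber {d : ℕ} (α : Fin d → ℝ)
    (A : (Fin d → ℝ) → Matrix (Fin 2) (Fin 2) ℝ) (ρ : ℝ) : Prop :=
  ∃ ψ : (Fin d → ℝ) → ℝ → ℝ, IsLift A ψ ∧
    ∃ μ : Measure ((Fin d → ℝ) × ℝ), IsProbabilityMeasure μ ∧
      μ.map (fun p : (Fin d → ℝ) × ℝ =>
        ((fun i => Int.fract (p.1 i + α i)), Int.fract (p.2 + ψ p.1 p.2))) = μ ∧
      μ.map Prod.fst = volume.restrict (Set.univ.pi fun _ : Fin d => Set.Ico (0:ℝ) 1) ∧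
      ρ = ∫ p, ψ p.1 p.2 ∂μ

/-- `A : 𝕋^d → SL(2,ℝ)` is homotopic to the identity. -/
def HomotopicToId {d : ℕ} (A : (Fin d → ℝ) → Matrix (Fin 2) (Fin 2) ℝ) : Prop :=
  ∃ H : ℝ → (Fin d → ℝ) → Matrix (Fin 2) (Fin 2) ℝ,
    Continuous (fun p : ℝ × (Fin d → ℝ) => H p.1 p.2) ∧
    (∀ t, Zperiodic (H t) ∧ ∀ θ, (H t θ).det = 1) ∧
    H 0 = A ∧ H 1 = fun _ => (1 : Matrix (Fin 2) (Fin 2) ℝ)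

/-- `B : 2𝕋^d → SL(2,ℝ)` has degree `n`, i.e. it is homotopic to
`θ ↦ R_{⟨n,θ⟩/2}`. -/
def HasDegree {d : ℕ} (B : (Fin d → ℝ) → Matrix (Fin 2) (Fin 2) ℝ) (n : Fin d → ℤ) : Prop :=
  ∃ H : ℝ → (Fin d → ℝ) → Matrix (Fin 2) (Fin 2) ℝ,
    Continuous (fun p : ℝ × (Fin d → ℝ) => H p.1 p.2) ∧
    (∀ t, Z2periodic (H t) ∧ ∀ θ, (H t θ).det = 1) ∧
    H 0 = B ∧ H 1 = fun θ => Rot ((∑ i, (n i : ℝ) * θ i) / 2)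

/-- The Schrödinger cocycle matrix `S^V_E(θ)`. -/
def schrodingerMat {d : ℕ} (V : (Fin d → ℝ) → ℝ) (E : ℝ) (θ : Fin d → ℝ) :
    Matrix (Fin 2) (Fin 2) ℝ := !![E - V θ, -1; 1, 0]

/-- The average `[g]` of a function on the torus `2𝕋^d`. -/
def avg2 {d : ℕ} (g : (Fin d → ℝ) → ℝ) : ℝ :=
  ((2 : ℝ) ^ d)⁻¹ * ∫ θ in Set.Icc (0 : Fin d → ℝ) (fun _ => 2), g θ

end QPS

open QPS


/-!
Write `f, g` for the first-row entries `X₁₁, X₁₂`. The second row of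
`S X(θ) = X(θ + α) [[1, ζ], [0, 1]]` gives the second row of `X(θ + α)` as
`(f θ, g θ - ζ f θ)`, so `det X(θ + α) = 1` becomes the Wronskian identity
`f(θ + α) g(θ) - f(θ) g(θ + α) = 1 + ζ f(θ) f(θ + α)`. Averaging over `2𝕋^d`, the right side is
at least `1 - ζ ‖X‖₀² ≥ 15/16`. The left side is a skew pairing of `f` and `g` in `L²`; since
translation by `α` preserves all the averages, Cauchy–Schwarz bounds its square by four times the
Gram determinant `D = [f²][g²] - [fg]²`. Hence `D ≥ 1/8`, and both estimates follow from
`[f²] ≤ ‖X‖₀² ≤ ζ^{-κ}/16` and `2 ‖X‖₀² ≥ 1`, the latter because `det X = 1`.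
-/

open Set ProbabilityTheory
open scoped RealInnerProductSpace

theorem sq_inner_sub_inner_le_four_mul_gram {E : Type*} [NormedAddCommGroup E]
    [InnerProductSpace ℝ E] {f g f' g' : E} (hf : ⟪f', f'⟫ = ⟪f, f⟫) (hg : ⟪g', g'⟫ = ⟪g, g⟫)
    (hfg : ⟪f', g'⟫ = ⟪f, g⟫) :
    (⟪f', g⟫ - ⟪f, g'⟫) ^ 2 ≤ 4 * (⟪f, f⟫ * ⟪g, g⟫ - ⟪f, g⟫ ^ 2) := by
  set A := ⟪f, f⟫
  set B := ⟪f, g⟫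
  set D := A * ⟪g, g⟫ - B ^ 2
  rcases (real_inner_self_nonneg (x := f)).eq_or_lt with hA | hA
  · have h0 : f = 0 := inner_self_eq_zero.mp hA.symm
    have h0' : f' = 0 := inner_self_eq_zero.mp (hf.trans hA.symm)
    simp [A, B, D, h0, h0']
  -- Replacing `g` by its component `u` orthogonal to `f` (scaled by `A`) multiplies the skew
  -- pairing by `A` and brings the Gram determinant into `⟪u, u⟫ = A * D`.
  set u := A • g - B • f
  set u' := A • g' - B • f'
  have hW : ⟪f', u⟫ - ⟪f, u'⟫ = A * (⟪f', g⟫ - ⟪f, g'⟫) := by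
    simp only [u, u', inner_sub_right, real_inner_smul_right, real_inner_comm f f']
    ring
  have hu : ⟪u, u⟫ = A * D := by
    simp only [u, D, inner_sub_left, inner_sub_right, real_inner_smul_left, real_inner_smul_right,
      real_inner_comm f g]
    ring
  have hu' : ⟪u', u'⟫ = A * D := by
    simp only [u', D, inner_sub_left, inner_sub_right, real_inner_smul_left, real_inner_smul_right,
      real_inner_comm f' g', hf, hg, hfg]
    ring
  have h1 := real_inner_mul_inner_self_le f' u
  have h2 := real_inner_mul_inner_self_le f u'
  rw [hf, hu] at h1
  rw [hu'] at h2
  have hAW : A ^ 2 * (⟪f', g⟫ - ⟪f, g'⟫) ^ 2 ≤ A ^ 2 * (4 * D) := by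
    rw [← mul_pow, ← hW]
    nlinarith [sq_nonneg (⟪f', u⟫ + ⟪f, u'⟫)]
  exact le_of_mul_le_mul_left hAW (by positivity)

theorem MeasureTheory.MemLp.inner_toLp {α : Type*} [MeasurableSpace α] {μ : Measure α}
    {f g : α → ℝ} (hf : MemLp f 2 μ) (hg : MemLp g 2 μ) :
    ⟪hf.toLp f, hg.toLp g⟫ = ∫ x, f x * g x ∂μ := by
  rw [L2.inner_def]
  refine integral_congr_ae ?_
  filter_upwards [hf.coeFn_toLp, hg.coeFn_toLp] with x hfx hgx
  rw [hfx, hgx, Real.inner_apply]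

theorem sq_integral_sub_integral_le_four_mul_gram {α : Type*} [MeasurableSpace α]
    {μ : Measure α} {f g f' g' : α → ℝ} (hfm : MemLp f 2 μ) (hgm : MemLp g 2 μ)
    (hfm' : MemLp f' 2 μ) (hgm' : MemLp g' 2 μ)
    (hf : ∫ x, f' x ^ 2 ∂μ = ∫ x, f x ^ 2 ∂μ) (hg : ∫ x, g' x ^ 2 ∂μ = ∫ x, g x ^ 2 ∂μ)
    (hfg : ∫ x, f' x * g' x ∂μ = ∫ x, f x * g x ∂μ) :
    (∫ x, f' x * g x ∂μ - ∫ x, f x * g' x ∂μ) ^ 2 ≤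
      4 * ((∫ x, f x ^ 2 ∂μ) * (∫ x, g x ^ 2 ∂μ) - (∫ x, f x * g x ∂μ) ^ 2) := by
  simp only [sq] at hf hg ⊢
  have key := sq_inner_sub_inner_le_four_mul_gram (f := hfm.toLp f) (g := hgm.toLp g)
    (f' := hfm'.toLp f') (g' := hgm'.toLp g') (by simpa only [MemLp.inner_toLp])
    (by simpa only [MemLp.inner_toLp]) (by simpa only [MemLp.inner_toLp])
  simpa only [sq, MemLp.inner_toLp] using key

theorem abs_integral_le_of_forall_abs_le {α : Type*} [MeasurableSpace α] {μ : Measure α}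
    [IsProbabilityMeasure μ] {f : α → ℝ} {C : ℝ} (h : ∀ x, |f x| ≤ C) : |∫ x, f x ∂μ| ≤ C := by
  simpa using norm_integral_le_of_norm_le_const (μ := μ)
    (.of_forall fun x => (Real.norm_eq_abs (f x)).trans_le (h x))

section Torus

variable {d : ℕ}

abbrev boxMeasure (d : ℕ) : Measure (Fin d → ℝ) := volume[|Icc 0 (fun _ => 2)]

lemma volume_Icc_zero_two : volume (Icc (0 : Fin d → ℝ) (fun _ => 2)) = 2 ^ d := by
  simp [Real.volume_Icc_pi]

instance : IsProbabilityMeasure (boxMeasure d) :=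
  cond_isProbabilityMeasure_of_finite (by simp [volume_Icc_zero_two])
    (by simp [volume_Icc_zero_two])

lemma avg2_eq_integral (g : (Fin d → ℝ) → ℝ) : avg2 g = ∫ θ, g θ ∂boxMeasure d := by
  simp [avg2, ProbabilityTheory.cond, integral_smul_measure, volume_Icc_zero_two]

lemma Continuous.memLp_boxMeasure {f : (Fin d → ℝ) → ℝ} (hf : Continuous f) (p : ℝ≥0∞) :
    MemLp f p (boxMeasure d) := by
  obtain ⟨C, hC⟩ := isCompact_Icc.exists_bound_of_continuousOn hf.continuousOn
  exact .of_bound hf.aestronglyMeasurable C ((ae_cond_mem measurableSet_Icc).mono hC)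

def latticeHom (d : ℕ) : (Fin d → ℤ) →+ (Fin d → ℝ) :=
  AddMonoidHom.mk' (fun n i => 2 * (n i : ℝ)) fun a b => by
    ext; simp only [Pi.add_apply, Int.cast_add]; ring

instance : Countable (latticeHom d).range := (latticeHom d).rangeRestrict_surjective.countable

lemma isAddFundamentalDomain_pi_Ico :
    IsAddFundamentalDomain (latticeHom d).range (univ.pi fun _ : Fin d => Ico (0 : ℝ) 2) volume := by
  refine .mk' (MeasurableSet.univ_pi fun _ => measurableSet_Ico).nullMeasurableSet fun x => ?_
  choose m hm hmu using fun i => existsUnique_add_zsmul_mem_Ico two_pos (x i) 0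
  have hmem (n : Fin d → ℤ) : (⟨latticeHom d n, n, rfl⟩ : (latticeHom d).range) +ᵥ x ∈
      univ.pi (fun _ => Ico (0 : ℝ) 2) ↔ ∀ i, x i + n i • (2 : ℝ) ∈ Ico 0 (0 + 2) := by
    change latticeHom d n + x ∈ _ ↔ _
    simp [latticeHom, add_comm, mul_comm]
  refine ⟨⟨latticeHom d m, m, rfl⟩, (hmem m).2 hm, ?_⟩
  rintro ⟨_, n, rfl⟩ hn
  rw [show n = m from funext fun i => hmu i (n i) ((hmem n).1 hn i)]

lemma setIntegral_Icc_comp_add_right {h : (Fin d → ℝ) → ℝ} (hp : Z2periodic h)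
    (α : Fin d → ℝ) :
    ∫ θ in Icc 0 (fun _ => 2), h (θ + α) = ∫ θ in Icc 0 (fun _ => 2), h θ := by
  have hB : (univ.pi fun _ : Fin d => Ico (0 : ℝ) 2) =ᵐ[volume] Icc 0 (fun _ => 2) :=
    Measure.univ_pi_Ico_ae_eq_Icc
  have hinv (g : (latticeHom d).range) (x : Fin d → ℝ) : h (g +ᵥ x) = h x := by
    obtain ⟨_, n, rfl⟩ := g
    change h (latticeHom d n + x) = h x
    rw [add_comm]
    exact hp x n
  simp_rw [← setIntegral_congr_set hB, add_comm _ α]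
  have hshift := (measurePreserving_vadd α volume).setIntegral_image_emb
    (measurableEmbedding_const_vadd α) h (univ.pi fun _ : Fin d => Ico (0 : ℝ) 2)
  simp only [vadd_eq_add] at hshift
  rw [← hshift]
  exact (isAddFundamentalDomain_pi_Ico.vadd_of_comm α).setIntegral_eq
    isAddFundamentalDomain_pi_Ico hinv

lemma integral_boxMeasure_comp_add_right {h : (Fin d → ℝ) → ℝ} (hp : Z2periodic h)
    (α : Fin d → ℝ) : ∫ θ, h (θ + α) ∂boxMeasure d = ∫ θ, h θ ∂boxMeasure d := by
  rw [← avg2_eq_integral, ← avg2_eq_integral, avg2, avg2, setIntegral_Icc_comp_add_right hp]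

theorem sq_integral_comp_add_sub_le_four_mul_gram {f g : (Fin d → ℝ) → ℝ} (hf : Continuous f)
    (hg : Continuous g) (hfp : Z2periodic f) (hgp : Z2periodic g) (α : Fin d → ℝ) :
    (∫ θ, f (θ + α) * g θ ∂boxMeasure d - ∫ θ, f θ * g (θ + α) ∂boxMeasure d) ^ 2 ≤
      4 * ((∫ θ, f θ ^ 2 ∂boxMeasure d) * (∫ θ, g θ ^ 2 ∂boxMeasure d) -
        (∫ θ, f θ * g θ ∂boxMeasure d) ^ 2) := by
  have hper {F : ℝ → ℝ → ℝ} : Z2periodic fun θ => F (f θ) (g θ) := fun θ n => by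
    simp only [hfp θ n, hgp θ n]
  exact sq_integral_sub_integral_le_four_mul_gram (hf.memLp_boxMeasure 2)
    (hg.memLp_boxMeasure 2) ((hf.comp (continuous_add_const α)).memLp_boxMeasure 2)
    ((hg.comp (continuous_add_const α)).memLp_boxMeasure 2)
    (integral_boxMeasure_comp_add_right (hper (F := fun x _ => x ^ 2)) α)
    (integral_boxMeasure_comp_add_right (hper (F := fun _ y => y ^ 2)) α)
    (integral_boxMeasure_comp_add_right (hper (F := (· * ·))) α)

lemma Z2periodic.range_eq_image_Icc {β : Type*} {f : (Fin d → ℝ) → β} (hp : Z2periodic f) :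
    range f = f '' Icc 0 (fun _ => 2) := by
  refine (range_subset_iff.2 fun θ => ?_).antisymm (image_subset_range _ _)
  have hfl (i : Fin d) := Int.floor_le (θ i / 2)
  have hlt (i : Fin d) := Int.lt_floor_add_one (θ i / 2)
  refine ⟨θ - fun i => 2 * (⌊θ i / 2⌋ : ℝ), ⟨fun i => ?_, fun i => ?_⟩, ?_⟩
  · simp only [Pi.sub_apply, Pi.zero_apply]; linarith [hfl i]
  · simp only [Pi.sub_apply]; linarith [hlt i]
  · simpa using (hp (θ - fun i => 2 * (⌊θ i / 2⌋ : ℝ)) fun i => ⌊θ i / 2⌋).symm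

lemma Z2periodic.isCompact_range {β : Type*} [TopologicalSpace β] {f : (Fin d → ℝ) → β}
    (hp : Z2periodic f) (hf : Continuous f) : IsCompact (range f) :=
  Z2periodic.range_eq_image_Icc hp ▸ isCompact_Icc.image hf

lemma Z2periodic.iteratedFDeriv {F : Type*} [NormedAddCommGroup F] [NormedSpace ℝ F]
    {f : (Fin d → ℝ) → F} (hp : Z2periodic f) (n : ℕ) : Z2periodic (iteratedFDeriv ℝ n f) := by
  intro θ m
  rw [← iteratedFDeriv_comp_add_right]
  congr 1
  exact funext fun x => hp x m

lemma norm_le_CkNorm {F : Type*} [NormedAddCommGroup F] [NormedSpace ℝ F]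
    {f : (Fin d → ℝ) → F} {k : ℕ} (hf : ContDiff ℝ k f) (hp : Z2periodic f) (θ : Fin d → ℝ) :
    ‖f θ‖ ≤ CkNorm k f := by
  have hbdd (n : Fin (k + 1)) : BddAbove (range fun θ => ‖iteratedFDeriv ℝ n f θ‖) := by
    have hc := hf.continuous_iteratedFDeriv (m := n) (by exact_mod_cast n.is_le)
    refine (Z2periodic.isCompact_range (fun θ m => ?_) hc.norm).bddAbove
    rw [Z2periodic.iteratedFDeriv hp n θ m]
  choose C hC using hbdd
  have : BddAbove (range fun p : Fin (k + 1) × (Fin d → ℝ) => ‖iteratedFDeriv ℝ p.1 f p.2‖) := by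
    refine ⟨⨆ n, C n, ?_⟩
    rintro _ ⟨⟨n, θ⟩, rfl⟩
    exact (hC n ⟨θ, rfl⟩).trans (le_ciSup (Finite.bddAbove_range C) n)
  have h0 := le_ciSup this (0, θ)
  rwa [Fin.val_zero, norm_iteratedFDeriv_zero] at h0

end Torus

lemma one_le_two_mul_sq_norm_of_det_eq_one {A : Matrix (Fin 2) (Fin 2) ℝ} (hA : A.det = 1) :
    1 ≤ 2 * ‖A‖ ^ 2 := by
  have h (i j : Fin 2) : |A i j| ≤ ‖A‖ := A.norm_entry_le_entrywise_sup_norm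
  rw [Matrix.det_fin_two] at hA
  have h1 : |A 0 0 * A 1 1| ≤ ‖A‖ * ‖A‖ :=
    (abs_mul _ _).trans_le (mul_le_mul (h 0 0) (h 1 1) (abs_nonneg _) (norm_nonneg _))
  have h2 : |A 0 1 * A 1 0| ≤ ‖A‖ * ‖A‖ :=
    (abs_mul _ _).trans_le (mul_le_mul (h 0 1) (h 1 0) (abs_nonneg _) (norm_nonneg _))
  linarith [le_abs_self (A 0 0 * A 1 1), neg_abs_le (A 0 1 * A 1 0)]

lemma wronskian_of_conj_schrodinger {a ζ : ℝ} {Y Y' : Matrix (Fin 2) (Fin 2) ℝ}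
    (hdet : Y'.det = 1) (h : Y'⁻¹ * !![a, -1; 1, 0] * Y = !![1, ζ; 0, 1]) :
    Y' 0 0 * Y 0 1 - Y 0 0 * Y' 0 1 = 1 + ζ * (Y 0 0 * Y' 0 0) := by
  have hmul : !![a, -1; 1, 0] * Y = Y' * !![1, ζ; 0, 1] := by
    rw [← h, ← Matrix.mul_assoc, Matrix.mul_nonsing_inv_cancel_left _ _ (by simp [hdet])]
  have h10 := congrFun (congrFun hmul 1) 0
  have h11 := congrFun (congrFun hmul 1) 1
  simp [Matrix.mul_apply, Fin.sum_univ_two] at h10 h11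
  rw [Matrix.det_fin_two] at hdet
  linear_combination (Y' 0 0) * h11 - (Y' 0 1 + ζ * Y' 0 0) * h10 + hdet

lemma integral_wronskian_of_conj_schrodinger {d : ℕ} {α : Fin d → ℝ} {V : (Fin d → ℝ) → ℝ}
    {E ζ : ℝ} {X : (Fin d → ℝ) → Matrix (Fin 2) (Fin 2) ℝ} (hX : Continuous X)
    (hXdet : ∀ θ, (X θ).det = 1)
    (hconj : ∀ θ, (X (θ + α))⁻¹ * schrodingerMat V E θ * X θ = !![1, ζ; 0, 1]) :
    ∫ θ, X (θ + α) 0 0 * X θ 0 1 ∂boxMeasure d - ∫ θ, X θ 0 0 * X (θ + α) 0 1 ∂boxMeasure d =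
      1 + ζ * ∫ θ, X θ 0 0 * X (θ + α) 0 0 ∂boxMeasure d := by
  have hint {F : (Fin d → ℝ) → ℝ} (hF : Continuous F) : Integrable F (boxMeasure d) :=
    memLp_one_iff_integrable.mp (hF.memLp_boxMeasure 1)
  have hent (i j : Fin 2) : Continuous fun θ => X θ i j := hX.matrix_elem i j
  have hshift (i j : Fin 2) : Continuous fun θ => X (θ + α) i j :=
    (hent i j).comp (continuous_add_const α)
  rw [← integral_sub]
  · simp_rw [wronskian_of_conj_schrodinger (hXdet _) (hconj _)]
    rw [integral_add, integral_const_mul]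
    · simp
    · exact integrable_const 1
    · exact hint (continuous_const.mul ((hent 0 0).mul (hshift 0 0)))
  · exact hint ((hshift 0 0).mul (hent 0 1))
  · exact hint ((hent 0 0).mul (hshift 0 1))

lemma rpow_mul_sq_le_of_mul_rpow_half_le {ζ κ M : ℝ} (hζ : 0 < ζ) (hM : 0 ≤ M)
    (h : M * ζ ^ (κ / 2) ≤ 1 / 4) : ζ ^ κ * M ^ 2 ≤ 1 / 16 := by
  have hs : ζ ^ κ = (ζ ^ (κ / 2)) ^ 2 := by
    rw [← Real.rpow_natCast, ← Real.rpow_mul hζ.le]; norm_num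
  have := mul_le_mul h h (by positivity) (by norm_num)
  rw [hs]; linarith

lemma le_rpow_of_mul_rpow_half_le {ζ κ M : ℝ} (hζ : 0 < ζ) (hκ0 : 0 < κ) (hκ1 : κ ≤ 1)
    (hM0 : 0 ≤ M) (hM : 1 ≤ 2 * M ^ 2) (h : M * ζ ^ (κ / 2) ≤ 1 / 4) : ζ ≤ ζ ^ κ := by
  refine Real.self_le_rpow_of_le_one hζ.le ?_ hκ1
  by_contra! hζ1
  have hs : 1 ≤ ζ ^ (κ / 2) := Real.one_le_rpow hζ1.le (by positivity)
  nlinarith [mul_le_mul_of_nonneg_left hs hM0]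

lemma one_div_eight_le_of_sq_one_add_mul_le {ζ P M D : ℝ} (hζ : 0 < ζ) (hP : |P| ≤ M ^ 2)
    (hζM : ζ * M ^ 2 ≤ 1 / 16) (h : (1 + ζ * P) ^ 2 ≤ 4 * D) : 1 / 8 ≤ D := by
  have hW : 15 / 16 ≤ 1 + ζ * P := by
    nlinarith [mul_le_mul_of_nonneg_left (abs_le.mp hP).1 hζ.le]
  nlinarith

lemma gap_edge_scalar_bounds {A B C M t : ℝ} (ht : 0 < t) (hA : 0 ≤ A) (hAM : A ≤ M ^ 2)
    (hM : 1 ≤ 2 * M ^ 2) (htM : t * M ^ 2 ≤ 1 / 16) (hD : 1 / 8 ≤ A * C - B ^ 2) :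
    0 < A / (A * C - B ^ 2) ∧ A / (A * C - B ^ 2) ≤ 1 / 2 * t⁻¹ ∧ 8 * t ^ 2 ≤ A * C - B ^ 2 := by
  have hDpos : 0 < A * C - B ^ 2 := by linarith
  have hApos : 0 < A := hA.lt_of_ne fun h => by subst h; nlinarith [sq_nonneg B]
  refine ⟨div_pos hApos hDpos, ?_, ?_⟩
  · rw [div_le_iff₀ hDpos, ← div_eq_mul_inv, div_mul_eq_mul_div, le_div_iff₀ ht]
    nlinarith
  · nlinarith

/-- **Averages of the conjugacy at a gap edge.**
If `X ∈ C^{k̃}(2𝕋^d, SL(2,ℝ))` conjugates the Schrödinger cocycle at `E_m^+` to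
`[[1,ζ],[0,1]]` with `ζ > 0`, then for any `κ ∈ (0,1/4)` with `‖X‖_{k̃} ζ^{κ/2} ≤ 1/4`:
`0 < [X₁₁²]/([X₁₁²][X₁₂²] - [X₁₁X₁₂]²) ≤ (1/2) ζ^{-κ}` and
`[X₁₁²][X₁₂²] - [X₁₁X₁₂]² ≥ 8 ζ^{2κ}`. -/
theorem averages_estimates_at_gap_edge
    (d : ℕ) (α : Fin d → ℝ) (V : (Fin d → ℝ) → ℝ) (E ζ κ : ℝ)
    (kt : ℕ) (X : (Fin d → ℝ) → Matrix (Fin 2) (Fin 2) ℝ)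
    (hX : ContDiff ℝ kt X) (hXp : Z2periodic X) (hXdet : ∀ θ, (X θ).det = 1)
    (hζ : 0 < ζ)
    (hconj : ∀ θ, (X (θ + α))⁻¹ * schrodingerMat V E θ * X θ = !![1, ζ; 0, 1])
    (hκ0 : 0 < κ) (hκ : κ < 1 / 4)
    (hsmall : CkNorm kt X * ζ ^ (κ / 2) ≤ 1 / 4) :
    (0 < avg2 (fun θ => X θ 0 0 ^ 2) /
        (avg2 (fun θ => X θ 0 0 ^ 2) * avg2 (fun θ => X θ 0 1 ^ 2) -
          avg2 (fun θ => X θ 0 0 * X θ 0 1) ^ 2)) ∧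
    (avg2 (fun θ => X θ 0 0 ^ 2) /
        (avg2 (fun θ => X θ 0 0 ^ 2) * avg2 (fun θ => X θ 0 1 ^ 2) -
          avg2 (fun θ => X θ 0 0 * X θ 0 1) ^ 2) ≤ 1 / 2 * ζ ^ (-κ)) ∧
    (8 * ζ ^ (2 * κ) ≤
      avg2 (fun θ => X θ 0 0 ^ 2) * avg2 (fun θ => X θ 0 1 ^ 2) -
        avg2 (fun θ => X θ 0 0 * X θ 0 1) ^ 2) := by
  simp only [avg2_eq_integral]
  set M := CkNorm kt X
  have hM (θ) (i j : Fin 2) : |X θ i j| ≤ M :=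
    (X θ).norm_entry_le_entrywise_sup_norm.trans (norm_le_CkNorm hX hXp θ)
  have hM0 : 0 ≤ M := (abs_nonneg _).trans (hM 0 0 0)
  have hM1 : 1 ≤ 2 * M ^ 2 := (one_le_two_mul_sq_norm_of_det_eq_one (hXdet 0)).trans
    (by gcongr; exact norm_le_CkNorm hX hXp 0)
  have hM2 (θ θ' : Fin d → ℝ) : |X θ 0 0 * X θ' 0 0| ≤ M ^ 2 := by
    rw [abs_mul, sq]; exact mul_le_mul (hM θ 0 0) (hM θ' 0 0) (abs_nonneg _) hM0
  have hper (i j : Fin 2) : Z2periodic fun θ => X θ i j := fun θ n => congrArg (· i j) (hXp θ n)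
  have hent (i j : Fin 2) : Continuous fun θ => X θ i j := hX.continuous.matrix_elem i j
  have hgram := sq_integral_comp_add_sub_le_four_mul_gram (hent 0 0) (hent 0 1) (hper 0 0)
    (hper 0 1) α
  rw [integral_wronskian_of_conj_schrodinger hX.continuous hXdet hconj] at hgram
  have hA : ∫ θ, X θ 0 0 ^ 2 ∂boxMeasure d ≤ M ^ 2 :=
    (le_abs_self _).trans (abs_integral_le_of_forall_abs_le fun θ => sq (X θ 0 0) ▸ hM2 θ θ)
  have htM := rpow_mul_sq_le_of_mul_rpow_half_le hζ hM0 hsmall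
  have hζM := mul_le_mul_of_nonneg_right
    (le_rpow_of_mul_rpow_half_le hζ hκ0 (by linarith) hM0 hM1 hsmall) (sq_nonneg M)
  have hD := one_div_eight_le_of_sq_one_add_mul_le hζ
    (abs_integral_le_of_forall_abs_le fun θ => hM2 θ (θ + α)) (hζM.trans htM) hgram
  rw [Real.rpow_neg hζ.le, mul_comm 2 κ, Real.rpow_mul hζ.le, Real.rpow_two]
  exact gap_edge_scalar_bounds (Real.rpow_pos_of_pos hζ κ)
    (integral_nonneg fun θ => sq_nonneg _) hA hM1 htM hD
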